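/- Let E be a finite ground set with |E| = n, let s range over a finite set of scenarios with probabilities p_s ≥ 0 summing to 1, and for each scenario s let g_s be a polymatroid rank function on E. Consider the achievable set A = { Σ_s p_s u_s : u_s ∈ B(g_s) for each s } ⊆ ℝ^E (the set of expected utility vectors of full-revelation signaling policies). Then there exists u ∈ A such that for every a ∈ A and every k ∈ {1, …, n}, Q_k(u) ≥ Q_k(a); that is, A contains a 1-majorized point. -/

import Mathlib

/-- The independence polytope of a set function on a finite ground set. -/
def indepP {E : Type*} [Fintype E] (f : Finset E → ℝ) : Set (E → ℝ) :=
  {x | (∀ i, 0 ≤ x i) ∧ ∀ S : Finset E, ∑ i ∈ S, x i ≤ f S}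

/-- The base polytope of a set function on a finite ground set. -/
def baseB {E : Type*} [Fintype E] (f : Finset E → ℝ) : Set (E → ℝ) :=
  {x ∈ indepP f | ∑ i, x i = f Finset.univ}

/-- `Qk x k` is the sum of the `k` smallest coordinates of `x`, i.e. the least
coordinate sum over subsets of size `k`. -/
noncomputable def Qk {E : Type*} [Fintype E] (x : E → ℝ) (k : ℕ) : ℝ :=
  sInf {s : ℝ | ∃ S : Finset E, S.card = k ∧ s = ∑ i ∈ S, x i}

/-!
The sum `f = ∑ₛ pₛ gₛ` is again a polymatroid rank function, and `A` is exactly its base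
polytope `B(f)`: a point of `B(f)` outside the compact convex set `A` would be separated from it
by a linear functional, but every linear functional is maximised over `B(f)` by a greedy vertex,
and the greedy vertex of `f` is the `p`-average of the greedy vertices of the `gₛ`, hence lies
in `A`.

The witness is the point `u` of minimal Euclidean norm in `B(f)` (Fujishige). If `u i < u j`
then some `u`-tight set contains `i` but not `j`, since otherwise moving a little mass from `j`
to `i` would stay in `B(f)` and decrease the norm. Tight sets are closed under `∪` and `∩`, so
every lower level set `L` of `u` is tight, and `a(L) ≤ f(L) = u(L)` for every `a ∈ B(f)`.
For `Q_k`, choose a level `θ` with `|{u < θ}| < k ≤ |{u ≤ θ}|`: then `Q_k(u)` is attained on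
`{u < θ}` plus `k - |{u < θ}|` coordinates equal to `θ`, while `Q_k(a)` is at most `a({u < θ})`
plus the average share of `a` on `{u = θ}`, and the two level-set inequalities compare these.
-/

open Finset

structure IsPolymatroidRank {E : Type*} [DecidableEq E] (f : Finset E → ℝ) : Prop where
  map_empty : f ∅ = 0
  mono : Monotone f
  submod : ∀ A B : Finset E, f (A ∪ B) + f (A ∩ B) ≤ f A + f B

lemma sum_isLinearMap {E : Type*} (S : Finset E) : IsLinearMap ℝ fun x : E → ℝ => ∑ i ∈ S, x i :=
  ⟨fun x y => by simp [sum_add_distrib], fun c x => by simp [mul_sum]⟩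

section BasePolytope

variable {E : Type*} [Fintype E]

lemma baseB_eq_iInter (f : Finset E → ℝ) : baseB f = (⋂ i, {x | 0 ≤ x i}) ∩
    (⋂ S : Finset E, {x | ∑ i ∈ S, x i ≤ f S}) ∩ {x | ∑ i, x i = f univ} := by
  ext; simp [baseB, indepP]

lemma baseB_convex (f : Finset E → ℝ) : Convex ℝ (baseB f) := by
  rw [baseB_eq_iInter]
  refine ((convex_iInter fun i => ?_).inter (convex_iInter fun S => ?_)).inter ?_
  · exact convex_halfSpace_ge (LinearMap.proj (R := ℝ) (φ := fun _ : E => ℝ) i).isLinear 0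
  · exact convex_halfSpace_le (sum_isLinearMap S) (f S)
  · exact convex_hyperplane (sum_isLinearMap univ) (f univ)

lemma isClosed_baseB (f : Finset E → ℝ) : IsClosed (baseB f) := by
  rw [baseB_eq_iInter]
  refine ((isClosed_iInter fun i => ?_).inter (isClosed_iInter fun S => ?_)).inter ?_
  · exact isClosed_le continuous_const (continuous_apply i)
  · exact isClosed_le (by fun_prop) continuous_const
  · exact isClosed_eq (by fun_prop) continuous_const

lemma isCompact_baseB (f : Finset E → ℝ) : IsCompact (baseB f) :=
  (isCompact_univ_pi fun i => isCompact_Icc (a := 0) (b := f {i})).of_isClosed_subset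
    (isClosed_baseB f) fun x hx i _ => ⟨hx.1.1 i, by simpa using hx.1.2 {i}⟩

end BasePolytope

section Greedy

variable {E : Type*} [Fintype E]

def prefixSet (e : Fin (Fintype.card E) ≃ E) (t : ℕ) : Finset E :=
  univ.filter fun i => (e.symm i : ℕ) < t

noncomputable def greedy (f : Finset E → ℝ) (e : Fin (Fintype.card E) ≃ E) : E → ℝ :=
  fun i => f (prefixSet e (e.symm i + 1)) - f (prefixSet e (e.symm i))

variable {e : Fin (Fintype.card E) ≃ E}

@[simp]
lemma mem_prefixSet {t : ℕ} {i : E} : i ∈ prefixSet e t ↔ (e.symm i : ℕ) < t := by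
  simp [prefixSet]

lemma prefixSet_zero : prefixSet e 0 = ∅ := by
  ext; simp

lemma prefixSet_of_card_le {t : ℕ} (ht : Fintype.card E ≤ t) : prefixSet e t = univ := by
  ext i; simpa using (e.symm i).2.trans_le ht

lemma greedy_apply (f : Finset E → ℝ) (t : Fin (Fintype.card E)) :
    greedy f e (e t) = f (prefixSet e (t + 1)) - f (prefixSet e t) := by
  simp [greedy]

variable [DecidableEq E]

lemma prefixSet_succ (t : Fin (Fintype.card E)) :
    prefixSet e (t + 1) = insert (e t) (prefixSet e t) := by
  ext i
  rw [mem_insert, mem_prefixSet, mem_prefixSet, Nat.lt_succ_iff_lt_or_eq, Fin.val_inj,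
    Equiv.symm_apply_eq, or_comm]

lemma sum_prefixSet_greedy {f : Finset E → ℝ} (hf0 : f ∅ = 0) (t : ℕ) :
    ∑ i ∈ prefixSet e t, greedy f e i = f (prefixSet e t) := by
  induction t with
  | zero => rw [prefixSet_zero, sum_empty, hf0]
  | succ t ih =>
    rcases lt_or_ge t (Fintype.card E) with ht | ht
    · rw [prefixSet_succ ⟨t, ht⟩, sum_insert (by simp), ih, ← prefixSet_succ ⟨t, ht⟩,
        greedy_apply]
      ring
    · rwa [prefixSet_of_card_le (by omega), ← prefixSet_of_card_le ht]

lemma sum_greedy_le {f : Finset E → ℝ} (hf0 : f ∅ = 0)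
    (hsub : ∀ A B : Finset E, f (A ∪ B) + f (A ∩ B) ≤ f A + f B) (S : Finset E) :
    ∑ i ∈ S, greedy f e i ≤ f S := by
  induction S using Finset.strongInduction with
  | H S ih =>
    rcases S.eq_empty_or_nonempty with rfl | hS
    · simp [hf0]
    obtain ⟨i, hi, hmax⟩ := S.exists_max_image (fun i => (e.symm i : ℕ)) hS
    obtain ⟨t, rfl⟩ := e.surjective i
    simp only [Equiv.symm_apply_apply] at hmax
    have hSt : S ⊆ insert (e t) (prefixSet e t) := fun j hj => by
      rw [← prefixSet_succ, mem_prefixSet]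
      exact Nat.lt_succ_of_le (hmax j hj)
    have hunion : S ∪ prefixSet e t = prefixSet e (t + 1) := by
      rw [prefixSet_succ]
      exact (union_subset hSt (subset_insert _ _)).antisymm
        (insert_subset (mem_union_left _ hi) subset_union_right)
    have hinter : S ∩ prefixSet e t = S.erase (e t) := by
      ext j
      simp only [mem_inter, mem_erase, mem_prefixSet, ne_eq, ← e.symm_apply_eq]
      exact ⟨fun ⟨hj, h⟩ => ⟨fun h' => by simp [h'] at h, hj⟩,
        fun ⟨h, hj⟩ => ⟨hj, lt_of_le_of_ne (hmax j hj) fun h' => h (Fin.ext h')⟩⟩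
    have := hsub S (prefixSet e t)
    rw [hunion, hinter] at this
    rw [← add_sum_erase S _ hi, greedy_apply]
    linarith [ih _ (erase_ssubset hi)]

lemma greedy_mem_baseB {f : Finset E → ℝ} (hf : IsPolymatroidRank f) : greedy f e ∈ baseB f := by
  refine ⟨⟨fun i => sub_nonneg.2 (hf.mono ?_), sum_greedy_le hf.map_empty hf.submod⟩, ?_⟩
  · exact monotone_filter_right _ fun _ _ h => Nat.lt_succ_of_lt h
  · have := sum_prefixSet_greedy (e := e) hf.map_empty (Fintype.card E)
    rwa [prefixSet_of_card_le le_rfl] at this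

lemma sum_mul_le_sum_mul_of_sum_prefixSet_le {w x y : E → ℝ} (hw : Antitone (w ∘ e))
    (hpre : ∀ t, ∑ i ∈ prefixSet e t, x i ≤ ∑ i ∈ prefixSet e t, y i)
    (htot : ∑ i, x i = ∑ i, y i) : ∑ i, w i * x i ≤ ∑ i, w i * y i := by
  set D : ℕ → ℝ := fun t => ∑ i ∈ prefixSet e t, (y i - x i)
  have hD : ∀ t, 0 ≤ D t := fun t => by simpa [D, sum_sub_distrib] using hpre t
  -- Abel summation along `e`, by induction on the length of the prefix.
  have key : ∀ t : Fin (Fintype.card E),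
      w (e t) * D (t + 1) ≤ ∑ i ∈ prefixSet e (t + 1), w i * (y i - x i) := by
    intro ⟨t, ht⟩
    induction t with
    | zero => simp [D, prefixSet_succ ⟨0, ht⟩, prefixSet_zero]
    | succ t ih =>
      have ih := ih (by omega)
      have hmono : w (e ⟨t + 1, ht⟩) ≤ w (e ⟨t, by omega⟩) := hw (Fin.mk_le_mk.2 t.le_succ)
      have hDt : D (t + 1 + 1) = y (e ⟨t + 1, ht⟩) - x (e ⟨t + 1, ht⟩) + D (t + 1) := by
        simp only [D]
        rw [prefixSet_succ ⟨t + 1, ht⟩, sum_insert (by simp)]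
      rw [prefixSet_succ ⟨t + 1, ht⟩, sum_insert (by simp), hDt]
      nlinarith [hD (t + 1)]
  rcases Nat.eq_zero_or_pos (Fintype.card E) with h0 | hpos
  · have : IsEmpty E := Fintype.card_eq_zero_iff.1 h0
    simp
  have hlast := key ⟨Fintype.card E - 1, by omega⟩
  simp only [Nat.sub_add_cancel hpos, D, prefixSet_of_card_le le_rfl, sum_sub_distrib, htot,
    sub_self, mul_zero, mul_sub] at hlast
  linarith

end Greedy

lemma exists_antitone_comp_equiv {E : Type*} [Fintype E] (w : E → ℝ) :
    ∃ e : Fin (Fintype.card E) ≃ E, Antitone (w ∘ e) := by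
  set q := (Fintype.equivFin E).symm
  refine ⟨(Tuple.sort fun t => -w (q t)).trans q, fun s t hst => ?_⟩
  simpa using Tuple.monotone_sort (fun t => -w (q t)) hst

section WeightedSum

variable {E σ : Type*} [Fintype σ] {p : σ → ℝ} {g : σ → Finset E → ℝ}

lemma IsPolymatroidRank.weightedSum [DecidableEq E] (hp : ∀ s, 0 ≤ p s)
    (hg : ∀ s, IsPolymatroidRank (g s)) : IsPolymatroidRank fun S => ∑ s, p s * g s S where
  map_empty := by simp [(hg _).map_empty]
  mono _ _ h := sum_le_sum fun s _ => mul_le_mul_of_nonneg_left ((hg s).mono h) (hp s)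
  submod A B := by
    simp only [← sum_add_distrib, ← mul_add]
    exact sum_le_sum fun s _ => mul_le_mul_of_nonneg_left ((hg s).submod A B) (hp s)

lemma weightedSum_mem_baseB [Fintype E] (hp : ∀ s, 0 ≤ p s) {v : σ → E → ℝ}
    (hv : ∀ s, v s ∈ baseB (g s)) :
    (fun i => ∑ s, p s * v s i) ∈ baseB fun S => ∑ s, p s * g s S := by
  refine ⟨⟨fun i => sum_nonneg fun s _ => mul_nonneg (hp s) ((hv s).1.1 i), fun S => ?_⟩, ?_⟩
  · rw [sum_comm]
    refine sum_le_sum fun s _ => ?_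
    rw [← mul_sum]
    exact mul_le_mul_of_nonneg_left ((hv s).1.2 S) (hp s)
  · rw [sum_comm]
    exact sum_congr rfl fun s _ => by rw [← mul_sum, (hv s).2]

theorem baseB_weightedSum [Fintype E] [DecidableEq E] (hp : ∀ s, 0 ≤ p s)
    (hg : ∀ s, IsPolymatroidRank (g s)) :
    baseB (fun S => ∑ s, p s * g s S) =
      (fun v i => ∑ s, p s * v s i) '' Set.univ.pi fun s => baseB (g s) := by
  set f := fun S => ∑ s, p s * g s S
  have hf : IsPolymatroidRank f := .weightedSum hp hg
  set K := (fun (v : σ → E → ℝ) i => ∑ s, p s * v s i) '' Set.univ.pi fun s => baseB (g s)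
  refine Set.Subset.antisymm (fun x hx => ?_) ?_
  · by_contra hxK
    have hlin : IsLinearMap ℝ fun (v : σ → E → ℝ) (i : E) => ∑ s, p s * v s i := by
      constructor <;> intros <;> ext <;> simp [mul_add, sum_add_distrib, mul_sum, mul_left_comm]
    have hKconv : Convex ℝ K := (convex_pi fun s _ => baseB_convex (g s)).is_linear_image hlin
    have hKcpt : IsCompact K :=
      (isCompact_univ_pi fun s => isCompact_baseB (g s)).image (by fun_prop)
    obtain ⟨φ, c, hφK, hφx⟩ := geometric_hahn_banach_closed_point hKconv hKcpt.isClosed hxK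
    set w : E → ℝ := fun i => φ fun j => if i = j then 1 else 0
    have hφ (y : E → ℝ) : φ y = ∑ i, w i * y i := by
      simpa [mul_comm] using LinearMap.pi_apply_eq_sum_univ φ.toLinearMap y
    obtain ⟨e, he⟩ := exists_antitone_comp_equiv w
    have hgreedy : greedy f e ∈ K := by
      refine ⟨fun s => greedy (g s) e, fun s _ => greedy_mem_baseB (hg s), ?_⟩
      ext i
      simp [f, greedy, mul_sub, sum_sub_distrib]
    have hopt : φ x ≤ φ (greedy f e) := by
      rw [hφ, hφ]
      refine sum_mul_le_sum_mul_of_sum_prefixSet_le he (fun t => ?_) ?_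
      · rw [sum_prefixSet_greedy hf.map_empty]
        exact hx.1.2 _
      · rw [hx.2, (greedy_mem_baseB hf).2]
    linarith [hφK _ hgreedy]
  · rintro _ ⟨v, hv, rfl⟩
    exact weightedSum_mem_baseB hp fun s => hv s (Set.mem_univ s)

end WeightedSum

lemma sum_add_single_sub_single {E : Type*} [DecidableEq E] (u : E → ℝ) (i j : E) (ε : ℝ)
    (S : Finset E) : ∑ t ∈ S, (u + Pi.single i ε - Pi.single j ε : E → ℝ) t =
      ∑ t ∈ S, u t + (if i ∈ S then ε else 0) - (if j ∈ S then ε else 0) := by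
  simp [sum_add_distrib, sum_sub_distrib, Finset.sum_pi_single']

section MinNorm

variable {E : Type*} [Fintype E] [DecidableEq E] {f : Finset E → ℝ} {u : E → ℝ}

lemma sum_sq_add_single_sub_single (u : E → ℝ) {i j : E} (hij : i ≠ j) (ε : ℝ) :
    ∑ t, (u + Pi.single i ε - Pi.single j ε : E → ℝ) t ^ 2 =
      ∑ t, u t ^ 2 + 2 * ε * (u i - u j) + 2 * ε ^ 2 := by
  have h : ∀ t, (u + Pi.single i ε - Pi.single j ε : E → ℝ) t ^ 2 = u t ^ 2
      + (Pi.single i (2 * ε * u i + ε ^ 2) : E → ℝ) t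
      + (Pi.single j (-2 * ε * u j + ε ^ 2) : E → ℝ) t := by
    intro t
    by_cases hti : t = i
    · subst hti; simp [hij]; ring
    by_cases htj : t = j
    · subst htj; simp [Ne.symm hij]; ring
    simp [hti, htj]
  simp only [h, sum_add_distrib, Finset.sum_pi_single', mem_univ, if_true]
  ring

lemma sum_union_eq_and_sum_inter_eq (hsub : ∀ A B : Finset E, f (A ∪ B) + f (A ∩ B) ≤ f A + f B)
    (hu : u ∈ indepP f) {A B : Finset E} (hA : ∑ t ∈ A, u t = f A) (hB : ∑ t ∈ B, u t = f B) :
    ∑ t ∈ A ∪ B, u t = f (A ∪ B) ∧ ∑ t ∈ A ∩ B, u t = f (A ∩ B) := by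
  have := sum_union_inter (s₁ := A) (s₂ := B) (f := u)
  have := hu.2 (A ∪ B)
  have := hu.2 (A ∩ B)
  have := hsub A B
  constructor <;> linarith

lemma add_single_sub_single_mem_baseB (hu : u ∈ baseB f) {i j : E} {ε : ℝ} (hε : 0 ≤ ε)
    (hεj : ε ≤ u j) (hslack : ∀ S : Finset E, i ∈ S → j ∉ S → ε ≤ f S - ∑ t ∈ S, u t) :
    (u + Pi.single i ε - Pi.single j ε : E → ℝ) ∈ baseB f := by
  refine ⟨⟨fun t => ?_, fun S => ?_⟩, ?_⟩
  · have := hu.1.1 t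
    simp only [Pi.add_apply, Pi.sub_apply, Pi.single_apply]
    split_ifs with hti htj htj <;> subst_vars <;> linarith
  · rw [sum_add_single_sub_single]
    have := hu.1.2 S
    by_cases hiS : i ∈ S
    · by_cases hjS : j ∈ S
      · simp only [hiS, hjS, if_true]; linarith
      · have := hslack S hiS hjS
        simp only [hiS, hjS, if_true, if_false]; linarith
    · split_ifs <;> linarith
  · simp only [sum_add_single_sub_single, mem_univ, if_true, hu.2]
    ring

lemma exists_tight_mem_notMem_of_isMinOn (hu : u ∈ baseB f)
    (hmin : IsMinOn (fun x : E → ℝ => ∑ i, x i ^ 2) (baseB f) u) {i j : E} (hij : u i < u j) :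
    ∃ T : Finset E, ∑ t ∈ T, u t = f T ∧ i ∈ T ∧ j ∉ T := by
  by_contra! htight
  have hne : i ≠ j := fun h => hij.ne (congrArg u h)
  set C := (univ : Finset (Finset E)).filter fun S => i ∈ S ∧ j ∉ S
  have hC : C.Nonempty := ⟨{i}, by simp [C, hne.symm]⟩
  set δ := C.inf' hC fun S => f S - ∑ t ∈ S, u t
  have hδ : 0 < δ := by
    refine (lt_inf'_iff hC).2 fun S hS => ?_
    obtain ⟨hiS, hjS⟩ := (mem_filter.1 hS).2
    exact sub_pos.2 ((hu.1.2 S).lt_of_ne fun h => hjS (htight S h hiS))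
  set ε := min δ ((u j - u i) / 2)
  have hε : 0 < ε := lt_min hδ (by linarith)
  have hεδ : ε ≤ δ := min_le_left _ _
  have hεij : ε ≤ (u j - u i) / 2 := min_le_right _ _
  set u' : E → ℝ := u + Pi.single i ε - Pi.single j ε
  have hu' : u' ∈ baseB f := add_single_sub_single_mem_baseB hu hε.le
    (by linarith [hu.1.1 i]) fun S hiS hjS => hεδ.trans (inf'_le _ (by simp [C, hiS, hjS]))
  have : ∑ t, u t ^ 2 ≤ ∑ t, u' t ^ 2 := hmin hu'
  rw [sum_sq_add_single_sub_single u hne] at this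
  nlinarith

lemma sum_eq_of_isMinOn (hf0 : f ∅ = 0)
    (hsub : ∀ A B : Finset E, f (A ∪ B) + f (A ∩ B) ≤ f A + f B) (hu : u ∈ baseB f)
    (hmin : IsMinOn (fun x : E → ℝ => ∑ i, x i ^ 2) (baseB f) u) {L : Finset E}
    (hL : ∀ i ∈ L, ∀ j ∉ L, u i < u j) : ∑ t ∈ L, u t = f L := by
  have hT : ∀ i j, ∃ T : Finset E, ∑ t ∈ T, u t = f T ∧ i ∈ T ∧ (u i < u j → j ∉ T) := by
    intro i j
    by_cases hij : u i < u j
    · obtain ⟨T, hT, hiT, hjT⟩ := exists_tight_mem_notMem_of_isMinOn hu hmin hij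
      exact ⟨T, hT, hiT, fun _ => hjT⟩
    · exact ⟨univ, hu.2, mem_univ i, fun h => absurd h hij⟩
  choose T hTtight hiT hjT using hT
  have hL_eq : L = L.sup fun i => (univ.filter (· ∉ L)).inf fun j => T i j := by
    ext x
    simp only [mem_sup, mem_inf, mem_filter, mem_univ, true_and]
    constructor
    · exact fun hx => ⟨x, hx, fun j _ => hiT x j⟩
    · rintro ⟨i, hi, hx⟩
      by_contra hxL
      exact hjT i x (hL i hi x hxL) (hx x hxL)
  rw [hL_eq]
  refine sup_induction (p := fun S => ∑ t ∈ S, u t = f S) (by simp [hf0])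
    (fun A hA B hB => (sum_union_eq_and_sum_inter_eq hsub hu.1 hA hB).1) fun i _ => ?_
  exact inf_induction (p := fun S => ∑ t ∈ S, u t = f S) hu.2
    (fun A hA B hB => (sum_union_eq_and_sum_inter_eq hsub hu.1 hA hB).2) fun j _ => hTtight i j

end MinNorm

section Qk

variable {E : Type*} [Fintype E]

lemma Qk_le (x : E → ℝ) {k : ℕ} {S : Finset E} (hS : #S = k) : Qk x k ≤ ∑ i ∈ S, x i := by
  refine csInf_le ?_ ⟨S, hS, rfl⟩
  refine ((Set.finite_range fun T : Finset E => ∑ i ∈ T, x i).subset ?_).bddBelow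
  rintro _ ⟨T, -, rfl⟩
  exact ⟨T, rfl⟩

lemma le_Qk (x : E → ℝ) {k : ℕ} (hk : k ≤ Fintype.card E) {c : ℝ}
    (h : ∀ S : Finset E, #S = k → c ≤ ∑ i ∈ S, x i) : c ≤ Qk x k := by
  obtain ⟨S, -, hS⟩ := exists_subset_card_eq (s := (univ : Finset E)) (by simpa using hk)
  refine le_csInf ⟨_, S, hS, rfl⟩ ?_
  rintro _ ⟨T, hT, rfl⟩
  exact h T hT

lemma exists_card_filter_lt_lt_le_card_filter_le (x : E → ℝ) {k : ℕ} (hk1 : 1 ≤ k)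
    (hk : k ≤ Fintype.card E) :
    ∃ θ, #(univ.filter (x · < θ)) < k ∧ k ≤ #(univ.filter (x · ≤ θ)) := by
  set C := univ.filter fun i => k ≤ #(univ.filter (x · ≤ x i))
  obtain ⟨imax, -, himax⟩ := (univ : Finset E).exists_max_image x
    (univ_nonempty_iff.2 (Fintype.card_pos_iff.1 (by omega)))
  have hC : C.Nonempty := ⟨imax, by simpa [C, filter_true_of_mem fun i _ => himax i (mem_univ i)]⟩
  obtain ⟨i₀, hi₀, hmin⟩ := C.exists_min_image x hC
  refine ⟨x i₀, not_le.1 fun hm => ?_, (mem_filter.1 hi₀).2⟩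
  obtain ⟨j, hj, hjmax⟩ := (univ.filter (x · < x i₀)).exists_max_image x (card_pos.1 (by omega))
  have hjC : j ∈ C := by
    refine mem_filter.2 ⟨mem_univ j, hm.trans (card_le_card fun l hl => ?_)⟩
    simpa using hjmax l hl
  exact absurd (hmin j hjC) (not_le.2 (mem_filter.1 hj).2)

lemma sum_filter_lt_sub_le_sum_sub (x : E → ℝ) (θ : ℝ) (S : Finset E) :
    ∑ i ∈ univ.filter (x · < θ), (x i - θ) ≤ ∑ i ∈ S, (x i - θ) :=
  calc ∑ i ∈ univ.filter (x · < θ), (x i - θ) = ∑ i, min (x i - θ) 0 := by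
        rw [sum_filter]
        refine sum_congr rfl fun i _ => ?_
        split_ifs with h
        · exact (min_eq_left (by linarith)).symm
        · exact (min_eq_right (by linarith)).symm
    _ ≤ ∑ i ∈ S, min (x i - θ) 0 :=
        sum_le_sum_of_subset_of_nonpos' (subset_univ S) fun i _ _ => min_le_right _ _
    _ ≤ ∑ i ∈ S, (x i - θ) := sum_le_sum fun i _ => min_le_left _ _

end Qk

lemma exists_subset_card_eq_mul_sum_le {α : Type*} [DecidableEq α] (x : α → ℝ) (W : Finset α)
    {j : ℕ} (hj : j ≤ #W) : ∃ T ⊆ W, #T = j ∧ (#W : ℝ) * ∑ i ∈ T, x i ≤ j * ∑ i ∈ W, x i := by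
  induction W using Finset.strongInduction with
  | H W ih =>
    rcases hj.eq_or_lt with rfl | hlt
    · exact ⟨W, subset_rfl, rfl, le_rfl⟩
    obtain ⟨w, hw, hmax⟩ := W.exists_max_image x (card_pos.1 (by omega))
    have hcard : #(W.erase w) + 1 = #W := card_erase_add_one hw
    obtain ⟨T, hTW, hT, hTsum⟩ := ih _ (erase_ssubset hw) (by omega)
    have hTw : ∑ i ∈ T, x i ≤ j * x w := by
      simpa [hT] using sum_le_card_nsmul T x (x w) fun i hi => hmax i (erase_subset w W (hTW hi))
    refine ⟨T, hTW.trans (erase_subset w W), hT, ?_⟩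
    rw [← hcard, ← add_sum_erase W x hw]
    push_cast
    linarith

lemma Qk_le_Qk_of_forall_sum_le {E : Type*} [Fintype E] [DecidableEq E] {u a : E → ℝ}
    (hlt : ∀ θ, ∑ i ∈ univ.filter (u · < θ), a i ≤ ∑ i ∈ univ.filter (u · < θ), u i)
    (hle : ∀ θ, ∑ i ∈ univ.filter (u · ≤ θ), a i ≤ ∑ i ∈ univ.filter (u · ≤ θ), u i)
    {k : ℕ} (hk1 : 1 ≤ k) (hk : k ≤ Fintype.card E) : Qk a k ≤ Qk u k := by
  obtain ⟨θ, hm, hN⟩ := exists_card_filter_lt_lt_le_card_filter_le u hk1 hk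
  set L₀ := univ.filter (u · < θ)
  set L := univ.filter (u · ≤ θ)
  have hL₀L : L₀ ⊆ L := monotone_filter_right _ fun _ _ => le_of_lt
  set W := L \ L₀
  obtain ⟨j, rfl⟩ : ∃ j, k = #L₀ + j := ⟨k - #L₀, by omega⟩
  have hWcard : #W + #L₀ = #L := card_sdiff_add_card_eq_card hL₀L
  obtain ⟨T, hTW, hT, hTavg⟩ := exists_subset_card_eq_mul_sum_le a W (j := j) (by omega)
  have hdisj : Disjoint L₀ T := disjoint_of_subset_right hTW disjoint_sdiff
  have hQa : Qk a (#L₀ + j) ≤ ∑ i ∈ L₀, a i + ∑ i ∈ T, a i := by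
    rw [← sum_union hdisj]
    exact Qk_le a (by rw [card_union_of_disjoint hdisj, hT])
  have hQu : ∑ i ∈ L₀, u i + j * θ ≤ Qk u (#L₀ + j) := by
    refine le_Qk u hk fun S hS => ?_
    have := sum_filter_lt_sub_le_sum_sub u θ S
    simp only [sum_sub_distrib, sum_const, nsmul_eq_mul, hS] at this
    push_cast at this
    linarith
  have huW : ∑ i ∈ W, u i = #W * θ := by
    rw [← nsmul_eq_mul, ← sum_const]
    refine sum_congr rfl fun i hi => ?_
    simp only [W, L, L₀, mem_sdiff, mem_filter, mem_univ, true_and, not_lt] at hi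
    exact le_antisymm hi.1 hi.2
  have hsa := sum_sdiff hL₀L (f := a)
  have hsu := sum_sdiff hL₀L (f := u)
  have hW : (0 : ℝ) < #W := by exact_mod_cast (show 0 < #W by omega)
  have hjW : (j : ℝ) ≤ #W := by exact_mod_cast (show j ≤ #W by omega)
  have key : (#W : ℝ) * (∑ i ∈ L₀, a i + ∑ i ∈ T, a i) ≤ #W * (∑ i ∈ L₀, u i + j * θ) :=
    calc (#W : ℝ) * (∑ i ∈ L₀, a i + ∑ i ∈ T, a i)
        ≤ (#W - j) * ∑ i ∈ L₀, a i + j * ∑ i ∈ L, a i := by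
          linear_combination hTavg + (j : ℝ) * hsa
      _ ≤ (#W - j) * ∑ i ∈ L₀, u i + j * ∑ i ∈ L, u i :=
          add_le_add (mul_le_mul_of_nonneg_left (hlt θ) (by linarith))
            (mul_le_mul_of_nonneg_left (hle θ) j.cast_nonneg)
      _ = #W * (∑ i ∈ L₀, u i + j * θ) := by
          linear_combination (-(j : ℝ)) * hsu + (j : ℝ) * huW
  exact hQa.trans ((le_of_mul_le_mul_left key hW).trans hQu)

lemma Qk_le_Qk_of_isMinOn {E : Type*} [Fintype E] [DecidableEq E] {f : Finset E → ℝ}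
    (hf0 : f ∅ = 0) (hsub : ∀ A B : Finset E, f (A ∪ B) + f (A ∩ B) ≤ f A + f B)
    {u : E → ℝ} (hu : u ∈ baseB f) (hmin : IsMinOn (fun x : E → ℝ => ∑ i, x i ^ 2) (baseB f) u)
    {a : E → ℝ} (ha : a ∈ indepP f) {k : ℕ} (hk1 : 1 ≤ k) (hk : k ≤ Fintype.card E) :
    Qk a k ≤ Qk u k := by
  refine Qk_le_Qk_of_forall_sum_le (fun θ => ?_) (fun θ => ?_) hk1 hk
  · rw [sum_eq_of_isMinOn hf0 hsub hu hmin fun i hi j hj => ?_]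
    · exact ha.2 _
    · simp only [mem_filter, mem_univ, true_and, not_lt] at hi hj
      exact hi.trans_le hj
  · rw [sum_eq_of_isMinOn hf0 hsub hu hmin fun i hi j hj => ?_]
    · exact ha.2 _
    · simp only [mem_filter, mem_univ, true_and, not_le] at hi hj
      exact hi.trans_lt hj

theorem stmt_5_general {E : Type*} [Fintype E] [DecidableEq E]
    {σ : Type*} [Fintype σ]
    (p : σ → ℝ) (hp : ∀ s, 0 ≤ p s)
    (g : σ → Finset E → ℝ)
    (hg0 : ∀ s, g s ∅ = 0)
    (hgmono : ∀ s, ∀ A B : Finset E, A ⊆ B → g s A ≤ g s B)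
    (hgsub : ∀ s, ∀ A B : Finset E, g s (A ∪ B) + g s (A ∩ B) ≤ g s A + g s B)
    (A : Set (E → ℝ))
    (hA : A = {a | ∃ u : σ → E → ℝ, (∀ s, u s ∈ baseB (g s)) ∧
      a = fun i => ∑ s, p s * u s i}) :
    ∃ u ∈ A, ∀ a ∈ A, ∀ k : ℕ,
      1 ≤ k → k ≤ Fintype.card E → Qk a k ≤ Qk u k := by
  have hg (s : σ) : IsPolymatroidRank (g s) := ⟨hg0 s, fun S T h => hgmono s S T h, hgsub s⟩
  have hf := IsPolymatroidRank.weightedSum hp hg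
  have hAB : A = baseB fun S => ∑ s, p s * g s S := by
    rw [hA, baseB_weightedSum hp hg]
    ext a
    simp [eq_comm]
  obtain ⟨u, hu, hmin⟩ := (isCompact_baseB _).exists_isMinOn
    ⟨_, greedy_mem_baseB (e := (Fintype.equivFin E).symm) hf⟩
    (f := fun x : E → ℝ => ∑ i, x i ^ 2) (by fun_prop)
  refine ⟨u, hAB ▸ hu, fun a ha k hk1 hk => ?_⟩
  rw [hAB] at ha
  exact Qk_le_Qk_of_isMinOn hf.map_empty hf.submod hu hmin ha.1 hk1 hk

/-- with finitely many scenarios `s` of probabilities `p s` and a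
polymatroid rank function `g s` for each, the achievable set of expected
utility vectors `A = { ∑ₛ pₛ uₛ : uₛ ∈ B(g s) }` contains a `1`-majorized
point. -/
theorem stmt_5 {E : Type*} [Fintype E] [DecidableEq E]
    {σ : Type*} [Fintype σ]
    (p : σ → ℝ) (hp : ∀ s, 0 ≤ p s) (hpsum : ∑ s, p s = 1)
    (g : σ → Finset E → ℝ)
    (hg0 : ∀ s, g s ∅ = 0)
    (hgmono : ∀ s, ∀ A B : Finset E, A ⊆ B → g s A ≤ g s B)
    (hgsub : ∀ s, ∀ A B : Finset E, g s (A ∪ B) + g s (A ∩ B) ≤ g s A + g s B)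
    (A : Set (E → ℝ))
    (hA : A = {a | ∃ u : σ → E → ℝ, (∀ s, u s ∈ baseB (g s)) ∧
      a = fun i => ∑ s, p s * u s i}) :
    ∃ u ∈ A, ∀ a ∈ A, ∀ k : ℕ,
      1 ≤ k → k ≤ Fintype.card E → Qk a k ≤ Qk u k :=
  stmt_5_general p hp g hg0 hgmono hgsub A hA
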